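/- arXiv:1810.10644 — 7 statements merged into one kernel-verified Lean document; each statement's English description precedes it below -/
import Mathlib

section
/- Let N ≥ 1, let F be an N×N complex Hermitian matrix such that I_N − F is invertible, and set G = (I_N − F)⁻¹ − (1/2)·I_N. Then G is positive definite if and only if the spectral norm of F is strictly less than 1. -/
/-!
By the continuous functional calculus, `G = f(F)` with `f t = (1 - t)⁻¹ - 1/2`, which is defined on
the spectrum of `F` because `1 - F` is invertible. Hence `G` is positive definite iff `f > 0` on the
spectrum. Since `f t = (1 + t)(1 - t) / (2 (1 - t)²)`, this means the spectrum lies in `(-1, 1)`,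
which for a self-adjoint `F` is exactly `‖F‖ < 1`.
-/

open scoped Matrix.Norms.L2Operator ComplexOrder

lemma inv_one_sub_sub_half_pos_iff_abs_lt_one {t : ℝ} (ht : t ≠ 1) :
    0 < (1 - t)⁻¹ - 1 / 2 ↔ |t| < 1 := by
  have ht' : 1 - t ≠ 0 := sub_ne_zero.mpr ht.symm
  have h : (1 - t)⁻¹ - 1 / 2 = (1 + t) * (1 - t) / (2 * (1 - t) ^ 2) := by
    field_simp
    ring
  rw [h, div_pos_iff_of_pos_right (by positivity), abs_lt]
  constructor
  · intro h'
    constructor <;> nlinarith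
  · rintro ⟨h1, h2⟩
    nlinarith

lemma spectrum.one_notMem_of_isUnit_one_sub {R A : Type*} [CommSemiring R] [Ring A] [Algebra R A]
    {a : A} (h : IsUnit (1 - a)) : (1 : R) ∉ spectrum R a :=
  spectrum.notMem_iff.mpr (by simpa using h)

section CStarAlgebra

variable {A : Type*} [CStarAlgebra A] {a : A}

lemma IsSelfAdjoint.norm_lt_iff_forall_spectrum_abs_lt (ha : IsSelfAdjoint a) {c : ℝ}
    (hc : 0 < c) : ‖a‖ < c ↔ ∀ x ∈ spectrum ℝ a, |x| < c := by
  simpa [cfc_id' ℝ a] using norm_cfc_lt_iff (fun x : ℝ ↦ x) a hc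

lemma IsSelfAdjoint.cfc_inv_one_sub_sub_half (ha : IsSelfAdjoint a) (h : IsUnit (1 - a)) :
    cfc (fun x : ℝ ↦ (1 - x)⁻¹ - 1 / 2) a = Ring.inverse (1 - a) - (1 / 2 : ℂ) • 1 := by
  have h1 : ∀ x ∈ spectrum ℝ a, 1 - x ≠ 0 := fun x hx ↦
    sub_ne_zero.mpr (ne_of_mem_of_not_mem hx (spectrum.one_notMem_of_isUnit_one_sub h)).symm
  rw [cfc_sub .., cfc_inv (fun x : ℝ ↦ 1 - x) a h1, cfc_sub .., cfc_const_one .., cfc_id' ..,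
    cfc_const .., Algebra.algebraMap_eq_smul_one, ← Complex.coe_smul]
  norm_num

lemma IsSelfAdjoint.isStrictlyPositive_inverse_one_sub_sub_half_iff [PartialOrder A]
    [StarOrderedRing A] (ha : IsSelfAdjoint a) (h : IsUnit (1 - a)) :
    IsStrictlyPositive (Ring.inverse (1 - a) - (1 / 2 : ℂ) • 1) ↔ ‖a‖ < 1 := by
  have hne : ∀ x ∈ spectrum ℝ a, x ≠ 1 := fun x hx ↦
    ne_of_mem_of_not_mem hx (spectrum.one_notMem_of_isUnit_one_sub h)
  have hcont : ContinuousOn (fun x : ℝ ↦ (1 - x)⁻¹ - 1 / 2) (spectrum ℝ a) :=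
    ((continuousOn_const.sub continuousOn_id).inv₀ fun x hx ↦
      sub_ne_zero.mpr (hne x hx).symm).sub continuousOn_const
  rw [← ha.cfc_inv_one_sub_sub_half h, cfc_isStrictlyPositive_iff _ a hcont,
    ha.norm_lt_iff_forall_spectrum_abs_lt zero_lt_one]
  exact forall₂_congr fun x hx ↦ inv_one_sub_sub_half_pos_iff_abs_lt_one (hne x hx)

end CStarAlgebra

theorem stmt_0_general (N : ℕ) (F : Matrix (Fin N) (Fin N) ℂ)
    (hF : F.IsHermitian) (hInv : IsUnit (1 - F))
    (G : Matrix (Fin N) (Fin N) ℂ)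
    (hG : G = (1 - F)⁻¹ - (1 / 2 : ℂ) • 1) :
    G.PosDef ↔ ‖F‖ < 1 := by
  open scoped MatrixOrder in
  rw [← Matrix.isStrictlyPositive_iff_posDef, hG, Matrix.nonsing_inv_eq_ringInverse,
    hF.isSelfAdjoint.isStrictlyPositive_inverse_one_sub_sub_half_iff hInv]

theorem stmt_0 (N : ℕ) (hN : 1 ≤ N) (F : Matrix (Fin N) (Fin N) ℂ)
    (hF : F.IsHermitian) (hInv : IsUnit (1 - F))
    (G : Matrix (Fin N) (Fin N) ℂ)
    (hG : G = (1 - F)⁻¹ - (1 / 2 : ℂ) • 1) :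
    G.PosDef ↔ ‖F‖ < 1 :=
  stmt_0_general N F hF hInv G hG
end

section
/- Let M ≥ 1 and let F be a 2M×2M complex Hermitian matrix, written in block form F = [[F₁₁, F₁₂],[F₂₁, F₂₂]] with M×M blocks, such that I_{2M} − F is invertible, and set G = (I_{2M} − F)⁻¹ − (1/2)·I_{2M}. Then the two conditions (G is positive definite, and G + (1/2)·diag(I_M, −I_M) is positive semidefinite) hold if and only if the spectral norm of F is strictly less than 1 and F₂₂ is positive semidefinite. -/
open scoped Matrix.Norms.L2Operator ComplexOrder

/-!
Conjugating by the self-adjoint unit `1 - F` turns `G` into `½ (1 - F * F)`, so `G > 0` iff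
`‖F‖ < 1`. With `P = diag(0, I)`, the second condition reads `P ≤ (1 - F)⁻¹`; conjugating by
`√(1 - F)` this becomes `‖P √(1 - F)‖ ≤ 1`, i.e. `P (1 - F) P ≤ 1`, and `1 - P (1 - F) P` is
`diag(I, F₂₂)`.
-/

namespace CStarAlgebra

variable {A : Type*} [CStarAlgebra A] [PartialOrder A] [StarOrderedRing A]

open Ring

lemma isStrictlyPositive_one_sub_of_norm_lt_one {a : A} (ha : IsSelfAdjoint a) (h : ‖a‖ < 1) :
    IsStrictlyPositive (1 - a) := by
  have hgap : IsStrictlyPositive (algebraMap ℝ A (1 - ‖a‖)) :=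
    isStrictlyPositive_algebraMap (sub_pos.mpr h)
  refine hgap.of_le ?_
  rw [map_sub, map_one]
  exact sub_le_sub_left ha.le_algebraMap_norm_self 1

lemma norm_lt_one_iff_of_nonneg (a : A) (ha : 0 ≤ a := by cfc_tac) :
    ‖a‖ < 1 ↔ IsStrictlyPositive (1 - a) := by
  refine ⟨isStrictlyPositive_one_sub_of_norm_lt_one (.of_nonneg ha), fun h => ?_⟩
  nontriviality A
  have hmem : 1 - ‖a‖ ∈ spectrum ℝ (1 - a) := by
    rw [← map_one (algebraMap ℝ A), ← spectrum.singleton_sub_eq]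
    exact Set.sub_mem_sub rfl (norm_mem_spectrum_of_nonneg ha)
  exact sub_pos.mp (h.spectrum_pos hmem)

lemma norm_lt_one_iff_isStrictlyPositive_one_sub_star_mul_self (a : A) :
    ‖a‖ < 1 ↔ IsStrictlyPositive (1 - star a * a) := by
  rw [← norm_lt_one_iff_of_nonneg _ (star_mul_self_nonneg a), CStarRing.norm_star_mul_self,
    ← sq, sq_lt_one_iff₀ (norm_nonneg a)]

lemma norm_le_one_iff_star_mul_self_le_one (a : A) : ‖a‖ ≤ 1 ↔ star a * a ≤ 1 := by
  rw [← norm_le_one_iff_of_nonneg _ (star_mul_self_nonneg a), CStarRing.norm_star_mul_self,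
    ← sq, sq_le_one_iff₀ (norm_nonneg a)]

lemma star_mul_self_le_ringInverse_iff {c : A} (hc : IsStrictlyPositive c) (x : A) :
    star x * x ≤ c⁻¹ʳ ↔ x * c * star x ≤ 1 := by
  set s := CFC.sqrt c
  have hs : IsSelfAdjoint s := .of_nonneg (CFC.sqrt_nonneg c)
  have hss : s * s = c := CFC.sqrt_mul_sqrt_self c hc.nonneg
  have hsu : IsUnit s := hc.isUnit_cfcSqrt
  have hsc : s * c⁻¹ʳ * s = 1 := by
    obtain ⟨u, hu⟩ := hsu
    rw [← hss, ← hu, ← Units.val_mul, Ring.inverse_unit]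
    simp
  calc star x * x ≤ c⁻¹ʳ ↔ 0 ≤ star s * (c⁻¹ʳ - star x * x) * s := by
        rw [hsu.star_left_conjugate_nonneg_iff, sub_nonneg]
    _ ↔ star (x * s) * (x * s) ≤ 1 := by
        rw [hs.star_eq, mul_sub, sub_mul, hsc, sub_nonneg, star_mul, hs.star_eq]; noncomm_ring
    _ ↔ ‖star (x * s)‖ ≤ 1 := by rw [norm_star, norm_le_one_iff_star_mul_self_le_one]
    _ ↔ x * c * star x ≤ 1 := by
        rw [norm_le_one_iff_star_mul_self_le_one, star_star, star_mul, hs.star_eq, ← hss]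
        noncomm_ring

lemma isStrictlyPositive_ringInverse_one_sub_sub_half_iff {f : A} (hf : IsSelfAdjoint f)
    (hu : IsUnit (1 - f)) :
    IsStrictlyPositive ((1 - f)⁻¹ʳ - (1 / 2 : ℂ) • 1) ↔ ‖f‖ < 1 := by
  have hconj : (1 - f) * ((1 - f)⁻¹ʳ - (1 / 2 : ℂ) • 1) * (1 - f) =
      (1 / 2 : ℂ) • (1 - star f * f) := by
    rw [hf.star_eq, mul_sub (1 - f), Ring.mul_inverse_cancel _ hu, mul_smul_comm, mul_one,
      sub_mul, one_mul, smul_mul_assoc, show (1 - f) * (1 - f) = 1 - 2 • f + f * f by noncomm_ring]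
    module
  have hhalf : IsStrictlyPositive ((1 / 2 : ℂ) • (1 - star f * f)) ↔
      IsStrictlyPositive (1 - star f * f) := by
    refine ⟨fun h => ?_, fun h => h.smul (by norm_num)⟩
    simpa [smul_smul] using h.smul (c := (2 : ℂ)) (by norm_num)
  rw [← hu.isStrictlyPositive_iff_conjugate_of_isSelfAdjoint _ _ ((IsSelfAdjoint.one A).sub hf),
    hconj, hhalf, norm_lt_one_iff_isStrictlyPositive_one_sub_star_mul_self]

end CStarAlgebra

namespace Matrix

lemma posSemidef_fromBlocks_one_zero_zero_iff {𝕜 m n : Type*} [RCLike 𝕜] [Fintype m]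
    [Fintype n] [DecidableEq m] (D : Matrix n n 𝕜) :
    (fromBlocks (1 : Matrix m m 𝕜) 0 0 D).PosSemidef ↔ D.PosSemidef := by
  have : Invertible (1 : Matrix m m 𝕜) := invertibleOne
  simpa using PosDef.one.fromBlocks₁₁ (0 : Matrix m n 𝕜) D

end Matrix

open scoped MatrixOrder
open Matrix CStarAlgebra Ring in
theorem stmt_1_general (M : ℕ)
    (F₁₁ F₁₂ F₂₁ F₂₂ : Matrix (Fin M) (Fin M) ℂ)
    (F : Matrix (Fin M ⊕ Fin M) (Fin M ⊕ Fin M) ℂ)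
    (hFblocks : F = Matrix.fromBlocks F₁₁ F₁₂ F₂₁ F₂₂)
    (hF : F.IsHermitian) (hInv : IsUnit (1 - F))
    (G : Matrix (Fin M ⊕ Fin M) (Fin M ⊕ Fin M) ℂ)
    (hG : G = (1 - F)⁻¹ - (1 / 2 : ℂ) • 1) :
    (G.PosDef ∧
        (G + (1 / 2 : ℂ) • Matrix.fromBlocks 1 0 0 (-1)).PosSemidef) ↔
      ‖F‖ < 1 ∧ F₂₂.PosSemidef := by
  rw [nonsing_inv_eq_ringInverse] at hG
  have hpos : G.PosDef ↔ ‖F‖ < 1 := by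
    rw [← isStrictlyPositive_iff_posDef, hG,
      isStrictlyPositive_ringInverse_one_sub_sub_half_iff hF hInv]
  set P : Matrix (Fin M ⊕ Fin M) (Fin M ⊕ Fin M) ℂ := fromBlocks 0 0 0 1
  have hshift : G + (1 / 2 : ℂ) • fromBlocks 1 0 0 (-1) = (1 - F)⁻¹ʳ - star P * P := by
    have hP : star P * P = (1 / 2 : ℂ) • 1 - (1 / 2 : ℂ) • fromBlocks 1 0 0 (-1) := by
      rw [← fromBlocks_one (l := Fin M) (m := Fin M) (α := ℂ)]
      simp only [P, star_eq_conjTranspose, fromBlocks_conjTranspose, fromBlocks_multiply,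
        fromBlocks_smul, sub_eq_add_neg, fromBlocks_neg, fromBlocks_add]
      congr 1 <;> norm_num [← add_smul]
    rw [hG, hP]
    abel
  have hcorner : 1 - P * (1 - F) * star P = fromBlocks 1 0 0 F₂₂ := by
    rw [hFblocks, ← fromBlocks_one (l := Fin M) (m := Fin M) (α := ℂ)]
    simp only [P, star_eq_conjTranspose, fromBlocks_conjTranspose, fromBlocks_multiply,
      sub_eq_add_neg, fromBlocks_neg, fromBlocks_add]
    congr 1 <;> simp
  rw [hpos]
  refine and_congr_right fun hnorm => ?_
  rw [← nonneg_iff_posSemidef, hshift, sub_nonneg,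
    star_mul_self_le_ringInverse_iff (isStrictlyPositive_one_sub_of_norm_lt_one hF hnorm),
    ← sub_nonneg, hcorner, nonneg_iff_posSemidef, posSemidef_fromBlocks_one_zero_zero_iff]

theorem stmt_1 (M : ℕ) (hM : 1 ≤ M)
    (F₁₁ F₁₂ F₂₁ F₂₂ : Matrix (Fin M) (Fin M) ℂ)
    (F : Matrix (Fin M ⊕ Fin M) (Fin M ⊕ Fin M) ℂ)
    (hFblocks : F = Matrix.fromBlocks F₁₁ F₁₂ F₂₁ F₂₂)
    (hF : F.IsHermitian) (hInv : IsUnit (1 - F))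
    (G : Matrix (Fin M ⊕ Fin M) (Fin M ⊕ Fin M) ℂ)
    (hG : G = (1 - F)⁻¹ - (1 / 2 : ℂ) • 1) :
    (G.PosDef ∧
        (G + (1 / 2 : ℂ) • Matrix.fromBlocks 1 0 0 (-1)).PosSemidef) ↔
      ‖F‖ < 1 ∧ F₂₂.PosSemidef :=
  stmt_1_general M F₁₁ F₁₂ F₂₁ F₂₂ F hFblocks hF hInv G hG
end

section
/- Let A be a real symmetric M×M matrix and let n, n' : Fin M → ℕ. Let (n, n') : Fin M ⊕ Fin M → ℕ denote the pattern equal to n on the first summand and n' on the second. Then haf((A ⊕ A) ⊘ J_{(n,n')}) = haf(A ⊘ J_n) · haf(A ⊘ J_{n'}). -/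
open scoped Classical


lemma sum_pair_image {ι κ : Type*} [DecidableEq ι] [DecidableEq κ]
    {f : κ → ι} (hf : Function.Injective f) (B : Matrix ι ι ℝ) (p : Finset κ) :
    ∑ u ∈ p.image f, ∑ v ∈ (p.image f).erase u, B u v
      = ∑ u ∈ p, ∑ v ∈ p.erase u, B (f u) (f v) := by
  rw [Finset.sum_image (fun a _ b _ h => hf h)]
  refine Finset.sum_congr rfl fun u hu => ?_
  rw [← Finset.image_erase hf, Finset.sum_image (fun a _ b _ h => hf h)]

lemma pair_sum {ι : Type*} [DecidableEq ι] (B : Matrix ι ι ℝ) {a b : ι} (hab : a ≠ b) :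
    ∑ u ∈ ({a, b} : Finset ι), ∑ v ∈ ({a, b} : Finset ι).erase u, B u v = B a b + B b a := by
  rw [Finset.sum_pair hab]
  have h1 : ({a, b} : Finset ι).erase a = {b} :=
    Finset.erase_insert (by simp [hab])
  have h2 : ({a, b} : Finset ι).erase b = {a} := by
    rw [Finset.pair_comm]; exact Finset.erase_insert (by simp [hab.symm])
  rw [h1, h2, Finset.sum_singleton, Finset.sum_singleton]



open scoped Classical in
/-- The hafnian of a matrix: the sum over all partitions of the index type into
unordered pairs (perfect matchings) of the products of the corresponding entries.
For a symmetric matrix `B` the term `(∑ u ∈ p, ∑ v ∈ p.erase u, B u v) / 2`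
equals `B u v` for the pair `p = {u, v}`. -/
noncomputable def hafnian {ι : Type*} [Fintype ι] [DecidableEq ι]
    (B : Matrix ι ι ℝ) : ℝ :=
  ∑ Mch ∈ Finset.univ.filter
      (fun Mch : Finset (Finset ι) =>
        (∀ p ∈ Mch, p.card = 2) ∧ ∀ x : ι, ∃! p, p ∈ Mch ∧ x ∈ p),
    ∏ p ∈ Mch, (∑ u ∈ p, ∑ v ∈ p.erase u, B u v) / 2

/-- The reduced Kronecker product `A ⊘ J_n`, indexed by `Σ i, Fin (n i)`,
whose `((i,a),(j,b))` entry is `A i j`. -/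
def rkron {ι : Type*} (A : Matrix ι ι ℝ) (n : ι → ℕ) :
    Matrix ((i : ι) × Fin (n i)) ((i : ι) × Fin (n i)) ℝ :=
  fun x y => A x.1 y.1


lemma pm_image {ι κ : Type*} [DecidableEq ι] [DecidableEq κ] (e : κ ≃ ι) (Mch : Finset (Finset κ))
    (h : (∀ p ∈ Mch, p.card = 2) ∧ ∀ x : κ, ∃! p, p ∈ Mch ∧ x ∈ p) :
    (∀ p ∈ Mch.image (Finset.image e), p.card = 2) ∧
      ∀ x : ι, ∃! p, p ∈ Mch.image (Finset.image e) ∧ x ∈ p := by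
  constructor
  · intro p hp
    obtain ⟨q, hq, rfl⟩ := Finset.mem_image.1 hp
    rw [Finset.card_image_of_injective _ e.injective]; exact h.1 q hq
  · intro x
    obtain ⟨q, ⟨hq, hx⟩, huniq⟩ := h.2 (e.symm x)
    refine ⟨q.image e, ⟨Finset.mem_image_of_mem _ hq,
      Finset.mem_image.2 ⟨e.symm x, hx, e.apply_symm_apply x⟩⟩, ?_⟩
    rintro p ⟨hp, hxp⟩
    obtain ⟨q', hq', rfl⟩ := Finset.mem_image.1 hp
    obtain ⟨y, hy, hyx⟩ := Finset.mem_image.1 hxp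
    have : y = e.symm x := by rw [← hyx]; simp
    subst this
    rw [huniq q' ⟨hq', hy⟩]

lemma image_image_symm {ι κ : Type*} [DecidableEq ι] [DecidableEq κ] (e : κ ≃ ι) (Mch : Finset (Finset κ)) :
    (Mch.image (Finset.image e)).image (Finset.image e.symm) = Mch := by
  rw [Finset.image_image]
  have : (Finset.image (e.symm : ι → κ) ∘ Finset.image (e : κ → ι)) = id := by
    funext s
    simp [Function.comp, Finset.image_image]
  rw [this, Finset.image_id]

lemma hafnian_reindex {ι κ : Type*} [Fintype ι] [DecidableEq ι] [Fintype κ] [DecidableEq κ]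
    (e : κ ≃ ι) (B : Matrix ι ι ℝ) :
    hafnian (B.submatrix e e) = hafnian B := by
  unfold hafnian
  refine Finset.sum_nbij' (fun M => M.image (Finset.image e))
    (fun M => M.image (Finset.image e.symm)) ?_ ?_ ?_ ?_ ?_
  · intro M hM
    simp only [Finset.mem_filter, Finset.mem_univ, true_and] at hM ⊢
    exact pm_image e M hM
  · intro M hM
    simp only [Finset.mem_filter, Finset.mem_univ, true_and] at hM ⊢
    exact pm_image e.symm M hM
  · intro M _; exact image_image_symm e M
  · intro M _
    have := image_image_symm e.symm M
    simpa using this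
  · intro M _
    rw [Finset.prod_image (fun a _ b _ h => Finset.image_injective e.injective h)]
    refine Finset.prod_congr rfl fun p _ => ?_
    rw [sum_pair_image e.injective]
    rfl

section Blocks
variable {α β : Type*} [Fintype α] [DecidableEq α] [Fintype β] [DecidableEq β]

lemma image_preimage_inl (p : Finset (α ⊕ β)) (h : ∀ x ∈ p, x.isLeft = true) :
    (p.preimage Sum.inl Sum.inl_injective.injOn).image Sum.inl = p := by
  ext x
  simp only [Finset.mem_image, Finset.mem_preimage]
  constructor
  · rintro ⟨a, ha, rfl⟩; exact ha
  · intro hx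
    cases x with
    | inl a => exact ⟨a, hx, rfl⟩
    | inr b => have := h _ hx; simp at this

lemma image_preimage_inr (p : Finset (α ⊕ β)) (h : ∀ x ∈ p, x.isRight = true) :
    (p.preimage Sum.inr Sum.inr_injective.injOn).image Sum.inr = p := by
  ext x
  simp only [Finset.mem_image, Finset.mem_preimage]
  constructor
  · rintro ⟨a, ha, rfl⟩; exact ha
  · intro hx
    cases x with
    | inr b => exact ⟨b, hx, rfl⟩
    | inl a => have := h _ hx; simp at this

lemma preimage_image_inl (q : Finset α) :
    ((q.image Sum.inl : Finset (α ⊕ β)).preimage Sum.inl Sum.inl_injective.injOn) = q := by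
  ext a; simp [Finset.mem_preimage, Sum.inl_injective.eq_iff]

lemma preimage_image_inr (q : Finset β) :
    ((q.image Sum.inr : Finset (α ⊕ β)).preimage Sum.inr Sum.inr_injective.injOn) = q := by
  ext a; simp [Finset.mem_preimage, Sum.inr_injective.eq_iff]

lemma hafnian_sum (C : Matrix (α ⊕ β) (α ⊕ β) ℝ)
    (h1 : ∀ a b, C (.inl a) (.inr b) = 0) (h2 : ∀ a b, C (.inr b) (.inl a) = 0) :
    hafnian C =
      hafnian (fun a b => C (.inl a) (.inl b)) * hafnian (fun a b => C (.inr a) (.inr b)) := by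
  unfold hafnian
  rw [Finset.sum_mul_sum, ← Finset.sum_product']
  rw [← Finset.sum_filter_add_sum_filter_not
      (Finset.univ.filter _)
      (fun Mch : Finset (Finset (α ⊕ β)) =>
        ∀ p ∈ Mch, (∀ x ∈ p, x.isLeft = true) ∨ (∀ x ∈ p, x.isRight = true))]
  have himp : ∑ Mch ∈ (Finset.univ.filter
      (fun Mch : Finset (Finset (α ⊕ β)) =>
        (∀ p ∈ Mch, p.card = 2) ∧ ∀ x, ∃! p, p ∈ Mch ∧ x ∈ p)).filter
      (fun Mch => ¬ ∀ p ∈ Mch, (∀ x ∈ p, x.isLeft = true) ∨ (∀ x ∈ p, x.isRight = true)),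
      ∏ p ∈ Mch, (∑ u ∈ p, ∑ v ∈ p.erase u, C u v) / 2 = 0 := by
    refine Finset.sum_eq_zero fun Mch hM => ?_
    simp only [Finset.mem_filter, Finset.mem_univ, true_and] at hM
    obtain ⟨⟨hcard, -⟩, hnp⟩ := hM
    push_neg at hnp
    obtain ⟨p, hp, hnl, hnr⟩ := hnp
    obtain ⟨x, hx, hxl⟩ := hnl
    obtain ⟨y, hy, hyr⟩ := hnr
    obtain ⟨b, rfl⟩ : ∃ b, x = Sum.inr b := by cases x <;> simp_all
    obtain ⟨a, rfl⟩ : ∃ a, y = Sum.inl a := by cases y <;> simp_all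
    have hxy : (Sum.inr b : α ⊕ β) ≠ Sum.inl a := by simp
    have hpeq : p = {Sum.inr b, Sum.inl a} := by
      refine (Finset.eq_of_subset_of_card_le ?_ ?_).symm
      · intro z hz
        rcases Finset.mem_insert.1 hz with rfl | hz
        · exact hx
        · rw [Finset.mem_singleton.1 hz]; exact hy
      · rw [hcard p hp, Finset.card_insert_of_notMem (by simp), Finset.card_singleton]
    refine Finset.prod_eq_zero hp ?_
    rw [hpeq, pair_sum C hxy, h2 a b, h1 a b]
    norm_num
  rw [himp, add_zero]
  refine Finset.sum_nbij'
    (fun Mch => ((Mch.filter fun p => ∀ x ∈ p, x.isLeft = true).image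
        (fun p => p.preimage Sum.inl Sum.inl_injective.injOn),
      (Mch.filter fun p => ∀ x ∈ p, x.isRight = true).image
        (fun p => p.preimage Sum.inr Sum.inr_injective.injOn)))
    (fun Pq => Pq.1.image (Finset.image Sum.inl) ∪ Pq.2.image (Finset.image Sum.inr))
    ?_ ?_ ?_ ?_ ?_
  · -- forward membership
    intro Mch hM
    simp only [Finset.mem_filter, Finset.mem_univ, true_and, Finset.mem_product] at hM ⊢
    obtain ⟨⟨hcard, huniq⟩, hpure⟩ := hM
    refine ⟨⟨?_, ?_⟩, ?_, ?_⟩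
    · intro p' hp'
      obtain ⟨q, hq, rfl⟩ := Finset.mem_image.1 hp'
      rw [Finset.mem_filter] at hq
      have := image_preimage_inl q hq.2
      calc (q.preimage Sum.inl Sum.inl_injective.injOn).card
          = ((q.preimage Sum.inl Sum.inl_injective.injOn).image Sum.inl).card :=
            (Finset.card_image_of_injective _ Sum.inl_injective).symm
        _ = q.card := by rw [this]
        _ = 2 := hcard q hq.1
    · intro a
      obtain ⟨p, ⟨hp, hap⟩, hu⟩ := huniq (Sum.inl a)
      have hleft : ∀ x ∈ p, x.isLeft = true := by
        rcases hpure p hp with h | h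
        · exact h
        · exact absurd (h _ hap) (by simp)
      refine ⟨p.preimage Sum.inl Sum.inl_injective.injOn,
        ⟨Finset.mem_image_of_mem _ (Finset.mem_filter.2 ⟨hp, hleft⟩),
          Finset.mem_preimage.2 hap⟩, ?_⟩
      rintro p' ⟨hp', hap'⟩
      obtain ⟨q, hq, rfl⟩ := Finset.mem_image.1 hp'
      rw [Finset.mem_filter] at hq
      rw [hu q ⟨hq.1, Finset.mem_preimage.1 hap'⟩]
    · intro p' hp'
      obtain ⟨q, hq, rfl⟩ := Finset.mem_image.1 hp'
      rw [Finset.mem_filter] at hq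
      have := image_preimage_inr q hq.2
      calc (q.preimage Sum.inr Sum.inr_injective.injOn).card
          = ((q.preimage Sum.inr Sum.inr_injective.injOn).image Sum.inr).card :=
            (Finset.card_image_of_injective _ Sum.inr_injective).symm
        _ = q.card := by rw [this]
        _ = 2 := hcard q hq.1
    · intro b
      obtain ⟨p, ⟨hp, hbp⟩, hu⟩ := huniq (Sum.inr b)
      have hright : ∀ x ∈ p, x.isRight = true := by
        rcases hpure p hp with h | h
        · exact absurd (h _ hbp) (by simp)
        · exact h
      refine ⟨p.preimage Sum.inr Sum.inr_injective.injOn,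
        ⟨Finset.mem_image_of_mem _ (Finset.mem_filter.2 ⟨hp, hright⟩),
          Finset.mem_preimage.2 hbp⟩, ?_⟩
      rintro p' ⟨hp', hbp'⟩
      obtain ⟨q, hq, rfl⟩ := Finset.mem_image.1 hp'
      rw [Finset.mem_filter] at hq
      rw [hu q ⟨hq.1, Finset.mem_preimage.1 hbp'⟩]
  · -- backward membership
    rintro ⟨M₁, M₂⟩ hM
    simp only [Finset.mem_filter, Finset.mem_univ, true_and, Finset.mem_product] at hM ⊢
    obtain ⟨⟨hc₁, hu₁⟩, hc₂, hu₂⟩ := hM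
    refine ⟨⟨?_, ?_⟩, ?_⟩
    · intro p hp
      rcases Finset.mem_union.1 hp with hp | hp
      · obtain ⟨q, hq, rfl⟩ := Finset.mem_image.1 hp
        rw [Finset.card_image_of_injective _ Sum.inl_injective]; exact hc₁ q hq
      · obtain ⟨q, hq, rfl⟩ := Finset.mem_image.1 hp
        rw [Finset.card_image_of_injective _ Sum.inr_injective]; exact hc₂ q hq
    · rintro (a | b)
      · obtain ⟨q, ⟨hq, haq⟩, hu⟩ := hu₁ a
        refine ⟨q.image Sum.inl,
          ⟨Finset.mem_union_left _ (Finset.mem_image_of_mem _ hq),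
            Finset.mem_image_of_mem _ haq⟩, ?_⟩
        rintro p ⟨hp, hap⟩
        rcases Finset.mem_union.1 hp with hp | hp
        · obtain ⟨q', hq', rfl⟩ := Finset.mem_image.1 hp
          obtain ⟨a', ha', ha'e⟩ := Finset.mem_image.1 hap
          obtain rfl : a' = a := Sum.inl_injective ha'e
          rw [hu q' ⟨hq', ha'⟩]
        · obtain ⟨q', hq', rfl⟩ := Finset.mem_image.1 hp
          obtain ⟨b', -, hb'e⟩ := Finset.mem_image.1 hap
          exact absurd hb'e (by simp)
      · obtain ⟨q, ⟨hq, hbq⟩, hu⟩ := hu₂ b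
        refine ⟨q.image Sum.inr,
          ⟨Finset.mem_union_right _ (Finset.mem_image_of_mem _ hq),
            Finset.mem_image_of_mem _ hbq⟩, ?_⟩
        rintro p ⟨hp, hbp⟩
        rcases Finset.mem_union.1 hp with hp | hp
        · obtain ⟨q', hq', rfl⟩ := Finset.mem_image.1 hp
          obtain ⟨a', -, ha'e⟩ := Finset.mem_image.1 hbp
          exact absurd ha'e (by simp)
        · obtain ⟨q', hq', rfl⟩ := Finset.mem_image.1 hp
          obtain ⟨b', hb', hb'e⟩ := Finset.mem_image.1 hbp
          obtain rfl : b' = b := Sum.inr_injective hb'e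
          rw [hu q' ⟨hq', hb'⟩]
    · intro p hp
      rcases Finset.mem_union.1 hp with hp | hp
      · obtain ⟨q, -, rfl⟩ := Finset.mem_image.1 hp
        left; intro x hx
        obtain ⟨a, -, rfl⟩ := Finset.mem_image.1 hx; rfl
      · obtain ⟨q, -, rfl⟩ := Finset.mem_image.1 hp
        right; intro x hx
        obtain ⟨b, -, rfl⟩ := Finset.mem_image.1 hx; rfl
  · -- left inverse
    intro Mch hM
    simp only [Finset.mem_filter, Finset.mem_univ, true_and] at hM
    obtain ⟨-, hpure⟩ := hM
    have hL : ((Mch.filter fun p => ∀ x ∈ p, x.isLeft = true).image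
        (fun p => p.preimage Sum.inl Sum.inl_injective.injOn)).image (Finset.image Sum.inl)
        = Mch.filter fun p => ∀ x ∈ p, x.isLeft = true := by
      rw [Finset.image_image]
      rw [Finset.image_congr (g := id) fun p hp => by
        simp only [Function.comp, id]
        exact image_preimage_inl p (Finset.mem_filter.1 hp).2]
      exact Finset.image_id
    have hR : ((Mch.filter fun p => ∀ x ∈ p, x.isRight = true).image
        (fun p => p.preimage Sum.inr Sum.inr_injective.injOn)).image (Finset.image Sum.inr)
        = Mch.filter fun p => ∀ x ∈ p, x.isRight = true := by
      rw [Finset.image_image]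
      rw [Finset.image_congr (g := id) fun p hp => by
        simp only [Function.comp, id]
        exact image_preimage_inr p (Finset.mem_filter.1 hp).2]
      exact Finset.image_id
    show _ ∪ _ = Mch
    rw [hL, hR, ← Finset.filter_or]
    exact Finset.filter_true_of_mem hpure
  · -- right inverse
    rintro ⟨M₁, M₂⟩ hM
    simp only [Finset.mem_filter, Finset.mem_univ, true_and, Finset.mem_product] at hM
    obtain ⟨⟨hc₁, -⟩, hc₂, -⟩ := hM
    have hfl : (M₁.image (Finset.image Sum.inl) ∪
        M₂.image (Finset.image Sum.inr)).filter (fun p => ∀ x ∈ p, x.isLeft = true)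
        = M₁.image (Finset.image Sum.inl) := by
      rw [Finset.filter_union]
      rw [Finset.filter_true_of_mem (fun p hp => by
        obtain ⟨q, -, rfl⟩ := Finset.mem_image.1 hp
        intro x hx; obtain ⟨a, -, rfl⟩ := Finset.mem_image.1 hx; rfl)]
      rw [Finset.filter_false_of_mem (fun p hp => by
        obtain ⟨q, hq, rfl⟩ := Finset.mem_image.1 hp
        obtain ⟨b, hb⟩ := Finset.card_pos.1 (by rw [hc₂ q hq]; norm_num)
        intro hall
        exact absurd (hall _ (Finset.mem_image_of_mem _ hb)) (by simp))]
      exact Finset.union_empty _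
    have hfr : (M₁.image (Finset.image Sum.inl) ∪
        M₂.image (Finset.image Sum.inr)).filter (fun p => ∀ x ∈ p, x.isRight = true)
        = M₂.image (Finset.image Sum.inr) := by
      rw [Finset.filter_union]
      rw [Finset.filter_false_of_mem (fun p hp => by
        obtain ⟨q, hq, rfl⟩ := Finset.mem_image.1 hp
        obtain ⟨a, ha⟩ := Finset.card_pos.1 (by rw [hc₁ q hq]; norm_num)
        intro hall
        exact absurd (hall _ (Finset.mem_image_of_mem _ ha)) (by simp))]
      rw [Finset.filter_true_of_mem (fun p hp => by
        obtain ⟨q, -, rfl⟩ := Finset.mem_image.1 hp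
        intro x hx; obtain ⟨b, -, rfl⟩ := Finset.mem_image.1 hx; rfl)]
      exact Finset.empty_union _
    refine Prod.ext ?_ ?_
    · dsimp only
      rw [hfl, Finset.image_image]
      rw [Finset.image_congr (g := id) fun q _ => by
        simp only [Function.comp, id]
        exact preimage_image_inl q]
      exact Finset.image_id
    · dsimp only
      rw [hfr, Finset.image_image]
      rw [Finset.image_congr (g := id) fun q _ => by
        simp only [Function.comp, id]
        exact preimage_image_inr q]
      exact Finset.image_id
  · -- values agree
    intro Mch hM
    simp only [Finset.mem_filter, Finset.mem_univ, true_and] at hM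
    obtain ⟨⟨hcard, -⟩, hpure⟩ := hM
    have hsplit : Mch = Mch.filter (fun p => ∀ x ∈ p, x.isLeft = true)
        ∪ Mch.filter (fun p => ∀ x ∈ p, x.isRight = true) := by
      rw [← Finset.filter_or]
      exact (Finset.filter_true_of_mem hpure).symm
    have hdisj : Disjoint (Mch.filter (fun p => ∀ x ∈ p, x.isLeft = true))
        (Mch.filter (fun p => ∀ x ∈ p, x.isRight = true)) := by
      rw [Finset.disjoint_left]
      intro p hp₁ hp₂
      rw [Finset.mem_filter] at hp₁ hp₂
      obtain ⟨x, hx⟩ := Finset.card_pos.1 (by rw [hcard p hp₁.1]; norm_num)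
      have hl := hp₁.2 x hx
      have hr := hp₂.2 x hx
      cases x with
      | inl a => simp at hr
      | inr b => simp at hl
    conv_lhs => rw [hsplit]
    rw [Finset.prod_union hdisj]
    have injL : Set.InjOn (fun p : Finset (α ⊕ β) => p.preimage Sum.inl Sum.inl_injective.injOn)
        ↑(Mch.filter (fun p => ∀ x ∈ p, x.isLeft = true)) := by
      intro q₁ h₁ q₂ h₂ he
      rw [Finset.coe_filter, Set.mem_setOf_eq] at h₁ h₂
      rw [← image_preimage_inl q₁ h₁.2, ← image_preimage_inl q₂ h₂.2]
      exact congrArg _ he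
    have injR : Set.InjOn (fun p : Finset (α ⊕ β) => p.preimage Sum.inr Sum.inr_injective.injOn)
        ↑(Mch.filter (fun p => ∀ x ∈ p, x.isRight = true)) := by
      intro q₁ h₁ q₂ h₂ he
      rw [Finset.coe_filter, Set.mem_setOf_eq] at h₁ h₂
      rw [← image_preimage_inr q₁ h₁.2, ← image_preimage_inr q₂ h₂.2]
      exact congrArg _ he
    dsimp only
    rw [Finset.prod_image injL, Finset.prod_image injR]
    congr 1
    · refine Finset.prod_congr rfl fun p hp => ?_
      rw [Finset.mem_filter] at hp
      congr 1
      conv_lhs => rw [← image_preimage_inl p hp.2]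
      rw [sum_pair_image Sum.inl_injective]
    · refine Finset.prod_congr rfl fun p hp => ?_
      rw [Finset.mem_filter] at hp
      congr 1
      conv_lhs => rw [← image_preimage_inr p hp.2]
      rw [sum_pair_image Sum.inr_injective]

end Blocks

def sigmaSumEquiv {M : ℕ} (n n' : Fin M → ℕ) :
    ((i : Fin M) × Fin (n i)) ⊕ ((i : Fin M) × Fin (n' i)) ≃
      (i : Fin M ⊕ Fin M) × Fin (Sum.elim n n' i) where
  toFun := Sum.elim (fun x => ⟨Sum.inl x.1, x.2⟩) (fun x => ⟨Sum.inr x.1, x.2⟩)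
  invFun := fun x => match x with
    | ⟨Sum.inl i, a⟩ => Sum.inl ⟨i, a⟩
    | ⟨Sum.inr i, a⟩ => Sum.inr ⟨i, a⟩
  left_inv := by rintro (⟨i, a⟩ | ⟨i, a⟩) <;> rfl
  right_inv := by rintro ⟨(i | i), a⟩ <;> rfl


theorem stmt_4 (M : ℕ) (A : Matrix (Fin M) (Fin M) ℝ) (hA : A.IsSymm)
    (n n' : Fin M → ℕ) :
    hafnian (rkron (Matrix.fromBlocks A 0 0 A) (Sum.elim n n')) =
      hafnian (rkron A n) * hafnian (rkron A n') := by
  rw [← hafnian_reindex (sigmaSumEquiv n n')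
    (rkron (Matrix.fromBlocks A 0 0 A) (Sum.elim n n'))]
  rw [hafnian_sum _ (fun a b => rfl) (fun a b => rfl)]
  rfl
end

section
/- Let A be a real symmetric M×M matrix and let n : Fin M → ℕ with ∑ᵢ n i = 2m for a natural number m. Then haf(A ⊘ J_n) = ((∏ᵢ (n i)!) / m!) times the coefficient of the monomial ∏ᵢ Xᵢ^{n i} in the multivariate polynomial ((1/2)·∑_{i,j} A i j · Xᵢ·Xⱼ)^m over ℝ in variables X₀,…,X_{M−1}. -/
open Finset

theorem Fintype.card_equiv_eq_ite (γ δ : Type*) [Fintype γ] [Fintype δ] [DecidableEq γ]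
    [DecidableEq δ] :
    Fintype.card (γ ≃ δ) =
      if Fintype.card γ = Fintype.card δ then (Fintype.card γ).factorial else 0 := by
  split_ifs with h
  · exact Fintype.card_equiv (Fintype.equivOfCardEq h)
  · exact Fintype.card_eq_zero_iff.mpr ⟨fun e => h (Fintype.card_congr e)⟩

section FiberwiseEquiv

variable {α β κ : Type*} (u : α → κ) (v : β → κ)

def fiberwiseEquivEquivPi :
    {f : α ≃ β // ∀ a, v (f a) = u a} ≃ ∀ k, ({a // u a = k} ≃ {b // v b = k}) where
  toFun f k := f.1.subtypeEquiv fun a => by rw [f.2 a]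
  invFun g := ⟨Equiv.ofFiberEquiv g, Equiv.ofFiberEquiv_map g⟩
  left_inv f := by ext a; rfl
  right_inv g := by
    funext k
    ext ⟨a, rfl⟩
    rfl

variable [Fintype α] [Fintype β] [Fintype κ] [DecidableEq α] [DecidableEq β] [DecidableEq κ]

theorem card_fiberwiseEquiv :
    Fintype.card {f : α ≃ β // ∀ a, v (f a) = u a} =
      ∏ k, Fintype.card ({a // u a = k} ≃ {b // v b = k}) := by
  rw [Fintype.card_congr (fiberwiseEquivEquivPi u v), Fintype.card_pi]

theorem sum_equiv_comp_eq_sum_card_smul {R : Type*} [AddCommMonoid R] (G : (α → κ) → R) :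
    ∑ f : α ≃ β, G (fun a => v (f a)) =
      ∑ w : α → κ, (∏ k, Fintype.card ({a // w a = k} ≃ {b // v b = k})) • G w := by
  rw [← Fintype.sum_fiberwise (fun (f : α ≃ β) a => v (f a))]
  refine Fintype.sum_congr _ _ fun w => ?_
  rw [← card_fiberwiseEquiv, Fintype.sum_congr _ _ fun f => congrArg G f.2, Finset.sum_const,
    Finset.card_univ]
  exact congrArg (· • G w) (Fintype.card_congr (Equiv.subtypeEquivRight fun f => funext_iff))

end FiberwiseEquiv

section PerfectMatching

variable {ι : Type*}

def IsPerfectMatching (P : Finset (Finset ι)) : Prop :=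
  (∀ p ∈ P, p.card = 2) ∧ ∀ x : ι, ∃! p, p ∈ P ∧ x ∈ p

namespace IsPerfectMatching

variable {P : Finset (Finset ι)}

noncomputable def block (hP : IsPerfectMatching P) (x : ι) : P :=
  ⟨(hP.2 x).choose, (hP.2 x).choose_spec.1.1⟩

theorem block_eq_iff (hP : IsPerfectMatching P) {x : ι} {p : P} :
    hP.block x = p ↔ x ∈ (p : Finset ι) :=
  ⟨fun h => h ▸ (hP.2 x).choose_spec.1.2,
    fun h => Subtype.ext ((hP.2 x).choose_spec.2 _ ⟨p.2, h⟩).symm⟩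

variable [Fintype ι] [DecidableEq ι]

theorem card_block_fiber (hP : IsPerfectMatching P) (p : P) :
    Fintype.card {x // hP.block x = p} = 2 := by
  rw [Fintype.card_congr (Equiv.subtypeEquivRight fun x => hP.block_eq_iff), Fintype.card_coe,
    hP.1 _ p.2]

theorem card_eq (hP : IsPerfectMatching P) {m : ℕ} (hcard : Fintype.card ι = 2 * m) :
    P.card = m := by
  have h := Fintype.card_congr (Equiv.sigmaFiberEquiv hP.block)
  simp only [Fintype.card_sigma, hP.card_block_fiber, sum_const, card_univ, Fintype.card_coe,
    hcard, smul_eq_mul] at h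
  omega

end IsPerfectMatching

variable [DecidableEq ι] {m : ℕ} (f : Fin m × Fin 2 ≃ ι)

def pairOf (k : Fin m) : Finset ι := {f (k, 0), f (k, 1)}

def matchingOf : Finset (Finset ι) := univ.image (pairOf f)

theorem card_pairOf (k : Fin m) : (pairOf f k).card = 2 :=
  card_pair fun h => by simpa using f.injective h

theorem apply_mem_pairOf_iff (a : Fin m × Fin 2) (k : Fin m) : f a ∈ pairOf f k ↔ a.1 = k := by
  obtain ⟨k', i⟩ := a
  fin_cases i <;> simp [pairOf, f.injective.eq_iff]

theorem pairOf_injective : Function.Injective (pairOf f) := fun k k' h =>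
  (apply_mem_pairOf_iff f (k, 0) k').mp (h ▸ mem_insert_self _ _)

theorem isPerfectMatching_matchingOf : IsPerfectMatching (matchingOf f) := by
  refine ⟨by simp [matchingOf, card_pairOf], fun x => ?_⟩
  obtain ⟨a, rfl⟩ := f.surjective x
  refine ⟨pairOf f a.1,
    ⟨mem_image_of_mem _ (mem_univ _), (apply_mem_pairOf_iff f a _).mpr rfl⟩, ?_⟩
  rintro _ ⟨hq, ha⟩
  obtain ⟨k, -, rfl⟩ := mem_image.mp hq
  rw [(apply_mem_pairOf_iff f a k).mp ha]

theorem pairOf_eq_block {P : Finset (Finset ι)} (hP : IsPerfectMatching P) {e : Fin m ≃ P}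
    (he : ∀ a, hP.block (f a) = e a.1) (k : Fin m) : pairOf f k = e k := by
  refine eq_of_subset_of_card_le (fun x hx => ?_) (by rw [card_pairOf, hP.1 _ (e k).2])
  obtain ⟨a, rfl⟩ := f.surjective x
  rw [← hP.block_eq_iff, he, (apply_mem_pairOf_iff f a k).mp hx]

theorem matchingOf_eq_of_block {P : Finset (Finset ι)} (hP : IsPerfectMatching P) {e : Fin m ≃ P}
    (he : ∀ a, hP.block (f a) = e a.1) : matchingOf f = P := by
  ext q
  simp only [matchingOf, mem_image, mem_univ, true_and, pairOf_eq_block f hP he]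
  exact ⟨fun ⟨k, hk⟩ => hk ▸ (e k).2, fun hq => ⟨e.symm ⟨q, hq⟩, by simp⟩⟩

variable [Fintype ι]

theorem exists_block_of_matchingOf_eq (hcard : Fintype.card ι = 2 * m)
    {P : Finset (Finset ι)} (hP : IsPerfectMatching P) (hf : matchingOf f = P) :
    ∃ e : Fin m ≃ P, ∀ a, hP.block (f a) = e a.1 := by
  have hmem (k : Fin m) : pairOf f k ∈ P := hf ▸ mem_image_of_mem _ (mem_univ k)
  have hbij : Function.Bijective fun k => (⟨pairOf f k, hmem k⟩ : P) := by
    refine (Fintype.bijective_iff_injective_and_card _).mpr ⟨fun k k' h => ?_, ?_⟩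
    · exact pairOf_injective f (congrArg Subtype.val h)
    · simp [hP.card_eq hcard]
  exact ⟨Equiv.ofBijective _ hbij,
    fun a => hP.block_eq_iff.mpr ((apply_mem_pairOf_iff f a _).mpr rfl)⟩

theorem card_block_comp_eq_fst {P : Finset (Finset ι)} (hP : IsPerfectMatching P)
    (hcard : Fintype.card ι = 2 * m) (e : Fin m ≃ P) :
    Fintype.card {f : Fin m × Fin 2 ≃ ι // ∀ a, hP.block (f a) = e a.1} = 2 ^ m := by
  have hfst (p : P) : Fintype.card {a : Fin m × Fin 2 // e a.1 = p} = 2 := by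
    rw [Fintype.card_congr (Equiv.prodSubtypeFstEquivSubtypeProd (p := fun k : Fin m => e k = p))]
    simp [← e.eq_symm_apply]
  refine (card_fiberwiseEquiv (fun a : Fin m × Fin 2 => e a.1) hP.block).trans ?_
  simp [Fintype.card_equiv_eq_ite, hfst, hP.card_block_fiber, hP.card_eq hcard]

theorem card_matchingOf_eq (hcard : Fintype.card ι = 2 * m) {P : Finset (Finset ι)}
    (hP : IsPerfectMatching P) :
    Fintype.card {f : Fin m × Fin 2 ≃ ι // matchingOf f = P} = 2 ^ m * m.factorial := by
  let Over (e : Fin m ≃ P) (f : Fin m × Fin 2 ≃ ι) : Prop := ∀ a, hP.block (f a) = e a.1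
  let toFiber (ef : {ef : (Fin m ≃ P) × (Fin m × Fin 2 ≃ ι) // Over ef.1 ef.2}) :
      {f : Fin m × Fin 2 ≃ ι // matchingOf f = P} :=
    ⟨ef.1.2, matchingOf_eq_of_block _ hP ef.2⟩
  have hbij : Function.Bijective toFiber := by
    refine ⟨fun ⟨⟨e, f⟩, he⟩ ⟨⟨e', f'⟩, he'⟩ h => ?_, fun ⟨f, hf⟩ => ?_⟩
    · obtain rfl : f = f' := congrArg Subtype.val h
      obtain rfl : e = e' := Equiv.ext fun k => (he (k, 0)).symm.trans (he' (k, 0))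
      rfl
    · obtain ⟨e, he⟩ := exists_block_of_matchingOf_eq f hcard hP hf
      exact ⟨⟨(e, f), he⟩, rfl⟩
  rw [← Fintype.card_of_bijective hbij,
    Fintype.card_congr (Equiv.subtypeProdEquivSigmaSubtype Over), Fintype.card_sigma]
  simp only [Over, card_block_comp_eq_fst hP hcard, sum_const, card_univ, smul_eq_mul]
  rw [Fintype.card_equiv (Fintype.equivOfCardEq (by simp [hP.card_eq hcard])), Fintype.card_fin,
    mul_comm]

end PerfectMatching

section Hafnian

variable {ι : Type*} [DecidableEq ι]

noncomputable def pairWeight (B : Matrix ι ι ℝ) (p : Finset ι) : ℝ :=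
  (∑ u ∈ p, ∑ v ∈ p.erase u, B u v) / 2

open scoped Classical in
theorem hafnian_eq_sum_ite [Fintype ι] (B : Matrix ι ι ℝ) :
    hafnian B = ∑ P, if IsPerfectMatching P then ∏ p ∈ P, pairWeight B p else 0 := by
  rw [← sum_filter]
  exact sum_congr (filter_congr fun _ _ => Iff.rfl) fun _ _ => rfl

theorem pairWeight_pair {B : Matrix ι ι ℝ} (hB : B.IsSymm) {u v : ι} (huv : u ≠ v) :
    pairWeight B {u, v} = B u v := by
  rw [pairWeight, sum_pair huv, erase_insert (notMem_singleton.mpr huv), pair_comm,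
    erase_insert (notMem_singleton.mpr huv.symm), sum_singleton, sum_singleton, hB.apply u v]
  ring

theorem prod_matchingOf_pairWeight {m : ℕ} {B : Matrix ι ι ℝ} (hB : B.IsSymm)
    (f : Fin m × Fin 2 ≃ ι) :
    ∏ p ∈ matchingOf f, pairWeight B p = ∏ k, B (f (k, 0)) (f (k, 1)) := by
  rw [matchingOf, prod_image fun k _ k' _ h => pairOf_injective f h]
  exact prod_congr rfl fun k _ => pairWeight_pair hB fun h => by simpa using f.injective h

theorem two_pow_mul_factorial_mul_hafnian [Fintype ι] {m : ℕ} (hcard : Fintype.card ι = 2 * m)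
    {B : Matrix ι ι ℝ} (hB : B.IsSymm) :
    (2 ^ m * m.factorial : ℝ) * hafnian B =
      ∑ f : Fin m × Fin 2 ≃ ι, ∏ k, B (f (k, 0)) (f (k, 1)) := by
  simp_rw [← prod_matchingOf_pairWeight hB]
  rw [← Fintype.sum_fiberwise matchingOf, hafnian_eq_sum_ite, mul_sum]
  refine Fintype.sum_congr _ _ fun P => ?_
  split_ifs with hP
  · rw [Fintype.sum_congr _ _ fun f : {f // matchingOf f = P} => by rw [f.2], sum_const, card_univ,
      card_matchingOf_eq hcard hP, nsmul_eq_mul]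
    push_cast
    rfl
  · have : IsEmpty {f : Fin m × Fin 2 ≃ ι // matchingOf f = P} :=
      ⟨fun f => hP (f.2 ▸ isPerfectMatching_matchingOf f.1)⟩
    simp

end Hafnian

theorem sum_equiv_sigma_fin {α κ R : Type*} [Fintype α] [DecidableEq α] [Fintype κ]
    [DecidableEq κ] [AddCommMonoid R] (n : κ → ℕ) (G : (α → κ) → R) :
    ∑ f : α ≃ (Σ k, Fin (n k)), G (fun a => (f a).1) =
      (∏ k, (n k).factorial) •
        ∑ w : α → κ, if ∀ k, Fintype.card {a // w a = k} = n k then G w else 0 := by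
  have hfib (k : κ) : Fintype.card {b : Σ k, Fin (n k) // b.1 = k} = n k := by
    rw [Fintype.card_congr (Equiv.sigmaSubtype k), Fintype.card_fin]
  rw [sum_equiv_comp_eq_sum_card_smul (v := Sigma.fst), Finset.smul_sum]
  refine Fintype.sum_congr _ _ fun w => ?_
  by_cases h : ∀ k, Fintype.card {a // w a = k} = n k
  · simp [Fintype.card_equiv_eq_ite, hfib, h]
  · obtain ⟨k, hk⟩ := not_forall.mp h
    rw [if_neg h, smul_zero, Finset.prod_eq_zero (mem_univ k)
      (by simp [Fintype.card_equiv_eq_ite, hfib, hk]), zero_smul]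

section Polynomial

variable {σ R : Type*} [Fintype σ] [CommSemiring R]

theorem MvPolynomial.prod_X_comp_eq_monomial [DecidableEq σ] {α : Type*} [Fintype α]
    (w : α → σ) :
    ∏ a, (X (w a) : MvPolynomial σ R) =
      monomial (Finsupp.equivFunOnFinite.symm fun i => Fintype.card {a // w a = i}) 1 := by
  simp_rw [X, ← monomial_sum_one]
  refine congrArg (monomial · 1) (Finsupp.ext fun i => ?_)
  rw [Finsupp.finsetSum_apply]
  simp [Finsupp.single_apply, Fintype.card_subtype]

theorem MvPolynomial.sum_mul_X_mul_X_pow (A : Matrix σ σ R) (m : ℕ) :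
    (∑ i, ∑ j, C (A i j) * X i * X j : MvPolynomial σ R) ^ m =
      ∑ w : Fin m × Fin 2 → σ, C (∏ k, A (w (k, 0)) (w (k, 1))) * ∏ a, X (w a) := by
  have hquad : (∑ i, ∑ j, C (A i j) * X i * X j : MvPolynomial σ R) =
      ∑ v : Fin 2 → σ, C (A (v 0) (v 1)) * ∏ b, X (v b) := by
    rw [← Fintype.sum_prod_type', ← (finTwoArrowEquiv σ).sum_comp]
    simp [Fin.prod_univ_two, mul_assoc]
  rw [hquad, ← Fin.prod_const, Finset.prod_univ_sum, Fintype.piFinset_univ,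
    ← (Equiv.curry _ _ _).sum_comp]
  refine Fintype.sum_congr _ _ fun w => ?_
  rw [Finset.prod_mul_distrib, ← map_prod, Fintype.prod_prod_type]
  rfl

theorem MvPolynomial.coeff_sum_mul_X_mul_X_pow [DecidableEq σ] (A : Matrix σ σ R) (m : ℕ)
    (d : σ → ℕ) :
    coeff (Finsupp.equivFunOnFinite.symm d)
        ((∑ i, ∑ j, C (A i j) * X i * X j : MvPolynomial σ R) ^ m) =
      ∑ w : Fin m × Fin 2 → σ,
        if ∀ i, Fintype.card {a // w a = i} = d i then ∏ k, A (w (k, 0)) (w (k, 1)) else 0 := by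
  simp only [sum_mul_X_mul_X_pow, prod_X_comp_eq_monomial, coeff_sum, coeff_C_mul, coeff_monomial,
    (Finsupp.equivFunOnFinite.symm).injective.eq_iff]
  refine Fintype.sum_congr _ _ fun w => ?_
  simp only [mul_ite, mul_one, mul_zero]
  exact if_congr _root_.funext_iff rfl rfl

end Polynomial

theorem Matrix.IsSymm.rkron {ι : Type*} {A : Matrix ι ι ℝ} (hA : A.IsSymm) (n : ι → ℕ) :
    (rkron A n).IsSymm :=
  Matrix.IsSymm.ext fun x y => hA.apply x.1 y.1

open MvPolynomial in
theorem stmt_5 (M m : ℕ) (A : Matrix (Fin M) (Fin M) ℝ) (hA : A.IsSymm)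
    (n : Fin M → ℕ) (hn : ∑ i, n i = 2 * m) :
    hafnian (rkron A n) =
      ((∏ i, Nat.factorial (n i) : ℕ) : ℝ) / (Nat.factorial m : ℝ) *
        MvPolynomial.coeff (Finsupp.equivFunOnFinite.symm n)
          ((MvPolynomial.C (1 / 2 : ℝ) *
              ∑ i : Fin M, ∑ j : Fin M,
                MvPolynomial.C (A i j) * MvPolynomial.X i * MvPolynomial.X j) ^ m) := by
  have hcard : Fintype.card ((i : Fin M) × Fin (n i)) = 2 * m := by
    simp [Fintype.card_sigma, hn]
  have hsum := sum_equiv_sigma_fin (α := Fin m × Fin 2) n fun w => ∏ k, A (w (k, 0)) (w (k, 1))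
  rw [← coeff_sum_mul_X_mul_X_pow, nsmul_eq_mul] at hsum
  have key := (two_pow_mul_factorial_mul_hafnian hcard (hA.rkron n)).trans hsum
  rw [mul_pow, ← map_pow, coeff_C_mul]
  -- abstracted because `rw` cannot re-typecheck `A i j` with `A : Matrix` at reducible transparency
  generalize (coeff (Finsupp.equivFunOnFinite.symm n)
    ((∑ i, ∑ j, C (A i j) * X i * X j) ^ m) : ℝ) = c at key ⊢
  rw [one_div, inv_pow]
  field_simp
  linear_combination key
end

section
/- Let A be a real symmetric M×M matrix with zero diagonal (A i i = 0 for all i), and let n : Fin M → ℕ. If there exists an index i with 2·(n i) > ∑ⱼ n j, then haf(A ⊘ J_n) = 0. -/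
theorem stmt_9 (M : ℕ) (A : Matrix (Fin M) (Fin M) ℝ) (hA : A.IsSymm)
    (hdiag : ∀ i, A i i = 0) (n : Fin M → ℕ)
    (h : ∃ i, 2 * n i > ∑ j, n j) :
    hafnian (rkron A n) = 0 := by
  classical
  obtain ⟨i, hi⟩ := h
  unfold hafnian
  apply Finset.sum_eq_zero
  intro Mch hM
  rw [Finset.mem_filter] at hM
  obtain ⟨-, hcard, hcover⟩ := hM
  set S : Finset ((j : Fin M) × Fin (n j)) :=
    Finset.univ.filter (fun x => x.1 = i) with hS
  have hdisj : ∀ p ∈ Mch, ∀ q ∈ Mch, p ≠ q → Disjoint p q := by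
    intro p hp q hq hpq
    rw [Finset.disjoint_left]
    intro x hxp hxq
    obtain ⟨r, -, hr⟩ := hcover x
    exact hpq ((hr p ⟨hp, hxp⟩).trans (hr q ⟨hq, hxq⟩).symm)
  have hunion : Mch.biUnion id = Finset.univ := by
    ext x
    simp only [Finset.mem_biUnion, id, Finset.mem_univ, iff_true]
    obtain ⟨p, ⟨hp, hxp⟩, -⟩ := hcover x
    exact ⟨p, hp, hxp⟩
  by_cases hex : ∃ p ∈ Mch, ∀ u ∈ p, u.1 = i
  · obtain ⟨p, hp, hpi⟩ := hex
    apply Finset.prod_eq_zero hp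
    have hz : ∀ u ∈ p, ∀ v ∈ p.erase u, rkron A n u v = 0 := by
      intro u hu v hv
      have h1 := hpi u hu
      have h2 := hpi v (Finset.mem_of_mem_erase hv)
      simp [rkron, h1, h2, hdiag]
    rw [Finset.sum_congr rfl (fun u hu => Finset.sum_eq_zero (hz u hu))]
    simp
  · push_neg at hex
    exfalso
    have hScard : S.card = n i := by
      have hSeq : S = ({i} : Finset (Fin M)).sigma (fun _ => Finset.univ) := by
        ext x
        simp [hS, Finset.mem_sigma]
      rw [hSeq, Finset.card_sigma]
      simp
    have hN : (Finset.univ : Finset ((j : Fin M) × Fin (n j))).card = ∑ j, n j := by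
      simp [Finset.card_univ, Fintype.card_sigma]
    have hSU : S = Mch.biUnion (fun p => S ∩ p) := by
      ext x
      simp only [Finset.mem_biUnion, Finset.mem_inter]
      constructor
      · intro hx
        obtain ⟨p, ⟨hp, hxp⟩, -⟩ := hcover x
        exact ⟨p, hp, hx, hxp⟩
      · rintro ⟨p, -, hx, -⟩
        exact hx
    have h1 : S.card = ∑ p ∈ Mch, (S ∩ p).card := by
      conv_lhs => rw [hSU]
      exact Finset.card_biUnion (fun p hp q hq hpq =>
        Finset.disjoint_of_subset_left Finset.inter_subset_right
          (Finset.disjoint_of_subset_right Finset.inter_subset_right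
            (hdisj p hp q hq hpq)))
    have hle : ∀ p ∈ Mch, (S ∩ p).card ≤ 1 := by
      intro p hp
      by_contra hle
      push_neg at hle
      have h2 : (S ∩ p).card ≤ p.card :=
        Finset.card_le_card Finset.inter_subset_right
      rw [hcard p hp] at h2
      have : (S ∩ p).card = 2 := le_antisymm h2 hle
      have heq : S ∩ p = p := Finset.eq_of_subset_of_card_le
        Finset.inter_subset_right (by rw [this, hcard p hp])
      obtain ⟨u, hu, hui⟩ := hex p hp
      have : u ∈ S ∩ p := by rw [heq]; exact hu
      rw [Finset.mem_inter, hS, Finset.mem_filter] at this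
      exact hui this.1.2
    have hSle : S.card ≤ Mch.card := by
      rw [h1]
      calc ∑ p ∈ Mch, (S ∩ p).card ≤ ∑ p ∈ Mch, 1 := Finset.sum_le_sum hle
        _ = Mch.card := by simp
    have hN2 : ∑ j, n j = 2 * Mch.card := by
      have hcb : (Mch.biUnion id).card = ∑ p ∈ Mch, (id p).card :=
        Finset.card_biUnion (fun p hp q hq hpq => hdisj p hp q hq hpq)
      rw [← hN, ← hunion, hcb]
      simp only [id]
      rw [Finset.sum_congr rfl hcard]
      simp [mul_comm]
    omega
end

section
/- Let Σ and Σ' be real positive definite n×n matrices. Then the following are equivalent: (i) there exists a permutation π of Fin n with Σ' i j = Σ (π i) (π j) for all i, j (Σ and Σ' are permutationally similar); (ii) for every x ∈ ℝⁿ, ∑_{σ ∈ Perm(Fin n)} exp(−x_σᵀ Σ⁻¹ x_σ) = ∑_{σ ∈ Perm(Fin n)} exp(−x_σᵀ (Σ')⁻¹ x_σ), where x_σ denotes the vector with (x_σ)ᵢ = x (σ i). -/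
/-!
Replacing `x` by `√s • x` turns the hypothesis into `∑ σ, exp (-s a σ) = ∑ σ, exp (-s b σ)` for
all `s ≥ 0`, where `a σ, b σ` are the two quadratic forms at `x ∘ σ`. Multiplying by `exp (s m)`
for the least value `m` and letting `s → ∞` shows that `m` occurs equally often on both sides;
cancelling it and inducting, the multisets of values of `a` and `b` agree. So for every `x` some
permutation `τ` gives `xᵀ Σ'⁻¹ x = x_τᵀ Σ⁻¹ x_τ`: `ℝⁿ` is covered by the zero sets of finitely many
quadratic polynomials, one of which must therefore vanish identically, and as both inverses are
symmetric, `Σ'⁻¹` is `Σ⁻¹` with rows and columns permuted by a single `τ`.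
-/
open Matrix Filter Topology

namespace Multiset

theorem tendsto_sum_map_exp_neg_mul_sub {A : Multiset ℝ} {m : ℝ} (hm : ∀ c ∈ A, m ≤ c) :
    Tendsto (fun s => (A.map fun c => Real.exp (-(s * (c - m)))).sum) atTop
      (𝓝 (A.count m)) := by
  induction A using Multiset.induction_on with
  | empty => simp
  | cons a A ih =>
    have hterm : Tendsto (fun s : ℝ => Real.exp (-(s * (a - m)))) atTop
        (𝓝 (if m = a then 1 else 0)) := by
      split_ifs with hma
      · simp [hma]
      · have hpos : 0 < a - m := sub_pos.2 ((hm a (mem_cons_self a A)).lt_of_ne hma)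
        exact Real.tendsto_exp_neg_atTop_nhds_zero.comp (tendsto_id.atTop_mul_const hpos)
    have := hterm.add (ih fun c hc => hm c (mem_cons_of_mem hc))
    simpa [count_cons, add_comm] using this

theorem eq_of_sum_map_exp_neg_mul_eventuallyEq {A B : Multiset ℝ}
    (h : ∀ᶠ s in atTop, (A.map fun c => Real.exp (-(s * c))).sum =
      (B.map fun c => Real.exp (-(s * c))).sum) :
    A = B := by
  induction A using Multiset.strongInductionOn generalizing B with
  | ih A ih =>
  obtain hAB | ⟨m, hmAB, hmin⟩ : A + B = 0 ∨ ∃ m ∈ A + B, ∀ c ∈ A + B, m ≤ c := by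
    rcases eq_or_ne (A + B) 0 with hAB | hAB
    · exact .inl hAB
    · have hne : (A + B).toFinset.Nonempty := toFinset_nonempty.2 hAB
      exact .inr ⟨_, mem_toFinset.1 ((A + B).toFinset.min'_mem hne),
        fun c hc => (A + B).toFinset.min'_le c (mem_toFinset.2 hc)⟩
  · obtain ⟨rfl, rfl⟩ := add_eq_zero.1 hAB
    rfl
  have rescale : ∀ (C : Multiset ℝ) (s : ℝ), (C.map fun c => Real.exp (-(s * (c - m)))).sum =
      Real.exp (s * m) * (C.map fun c => Real.exp (-(s * c))).sum := by
    intro C s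
    rw [← sum_map_mul_left]
    congr 1
    refine map_congr rfl fun c _ => ?_
    rw [← Real.exp_add]
    ring_nf
  have hcount : A.count m = B.count m := by
    have hA := tendsto_sum_map_exp_neg_mul_sub fun c hc => hmin c (mem_add.2 (.inl hc))
    have hB := tendsto_sum_map_exp_neg_mul_sub fun c hc => hmin c (mem_add.2 (.inr hc))
    refine Nat.cast_injective (R := ℝ) (tendsto_nhds_unique hA (hB.congr' ?_))
    filter_upwards [h] with s hs
    rw [rescale, rescale, hs]
  have hmA : m ∈ A := by
    rw [← count_pos] at hmAB ⊢
    rw [count_add, ← hcount] at hmAB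
    omega
  have hmB : m ∈ B := count_pos.1 (hcount ▸ count_pos.2 hmA)
  rw [← cons_erase hmA, ← cons_erase hmB, ih _ (erase_lt.2 hmA)]
  filter_upwards [h] with s hs
  rwa [← cons_erase hmA, ← cons_erase hmB, map_cons, map_cons, sum_cons, sum_cons,
    add_right_inj] at hs

end Multiset

theorem MvPolynomial.exists_eq_zero_of_forall_exists_eval_eq_zero {R σ ι : Type*} [CommRing R]
    [IsDomain R] [Infinite R] [Fintype ι] {P : ι → MvPolynomial σ R}
    (h : ∀ x, ∃ i, eval x (P i) = 0) : ∃ i, P i = 0 := by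
  have hprod : ∏ i, P i = 0 := funext fun x => by
    obtain ⟨i, hi⟩ := h x
    simpa [map_prod] using Finset.prod_eq_zero (Finset.mem_univ i) hi
  simpa using Finset.prod_eq_zero_iff.1 hprod

namespace Matrix

variable {R ι : Type*} [Fintype ι]

theorem eval_sum_X_mul_toMvPolynomial [CommRing R] (A : Matrix ι ι R) (x : ι → R) :
    MvPolynomial.eval x (∑ i, MvPolynomial.X i * A.toMvPolynomial i) = x ⬝ᵥ (A *ᵥ x) := by
  simp [toMvPolynomial_eval_eq_apply, dotProduct]

theorem exists_forall_dotProduct_mulVec_eq_of_forall_exists [CommRing R] [IsDomain R]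
    [Infinite R] {κ : Type*} [Fintype κ] (B : Matrix ι ι R) (A : κ → Matrix ι ι R)
    (h : ∀ x, ∃ k, x ⬝ᵥ (B *ᵥ x) = x ⬝ᵥ (A k *ᵥ x)) :
    ∃ k, ∀ x, x ⬝ᵥ (B *ᵥ x) = x ⬝ᵥ (A k *ᵥ x) := by
  have heval : ∀ k x, MvPolynomial.eval x (∑ i, MvPolynomial.X i * (B - A k).toMvPolynomial i) =
      x ⬝ᵥ (B *ᵥ x) - x ⬝ᵥ (A k *ᵥ x) := by
    intro k x
    rw [eval_sum_X_mul_toMvPolynomial, sub_mulVec, dotProduct_sub]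
  obtain ⟨k, hk⟩ := MvPolynomial.exists_eq_zero_of_forall_exists_eval_eq_zero fun x =>
    (h x).imp fun k hk => by rw [heval, hk, sub_self]
  exact ⟨k, fun x => sub_eq_zero.1 (by rw [← heval, hk, map_zero])⟩

theorem IsSymm.ext_of_dotProduct_mulVec [CommRing R] [IsDomain R] [CharZero R]
    {M N : Matrix ι ι R} (hM : M.IsSymm) (hN : N.IsSymm)
    (h : ∀ x, x ⬝ᵥ (M *ᵥ x) = x ⬝ᵥ (N *ᵥ x)) : M = N := by
  classical
  ext i j
  have hij := h (Pi.single i 1 + Pi.single j 1)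
  have hi := h (Pi.single i 1)
  have hj := h (Pi.single j 1)
  simp only [mulVec_add, dotProduct_add, add_dotProduct, mulVec_single_one,
    single_one_dotProduct, col_apply] at hij hi hj
  refine mul_left_cancel₀ (two_ne_zero (α := R)) ?_
  linear_combination hij - hi - hj - hM.apply i j + hN.apply i j

theorem dotProduct_submatrix_mulVec_self [CommSemiring R] {ι' : Type*} [Fintype ι']
    (A : Matrix ι ι R) (e : ι' ≃ ι) (x : ι' → R) :
    x ⬝ᵥ (A.submatrix e e *ᵥ x) = (x ∘ e.symm) ⬝ᵥ (A *ᵥ (x ∘ e.symm)) := by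
  rw [submatrix_mulVec_equiv, ← dotProduct_comp_equiv_symm]
  simp

end Matrix

section SymmetrizedGaussian

open Equiv

variable {ι : Type*} [Fintype ι] [DecidableEq ι]

theorem sum_perm_dotProduct_submatrix_mulVec {R M : Type*} [CommSemiring R] [AddCommMonoid M]
    (f : R → M) (A : Matrix ι ι R) (π : Perm ι) (x : ι → R) :
    ∑ σ : Perm ι, f ((x ∘ σ) ⬝ᵥ (A.submatrix π π *ᵥ (x ∘ σ))) =
      ∑ σ : Perm ι, f ((x ∘ σ) ⬝ᵥ (A *ᵥ (x ∘ σ))) := by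
  simp_rw [dotProduct_submatrix_mulVec_self]
  exact Equiv.sum_comp (Equiv.mulRight π⁻¹) fun σ => f ((x ∘ σ) ⬝ᵥ (A *ᵥ (x ∘ σ)))

theorem exists_perm_dotProduct_mulVec_eq_of_sum_exp_eq {A B : Matrix ι ι ℝ}
    (h : ∀ x : ι → ℝ, ∑ σ : Perm ι, Real.exp (-((x ∘ σ) ⬝ᵥ (A *ᵥ (x ∘ σ)))) =
      ∑ σ : Perm ι, Real.exp (-((x ∘ σ) ⬝ᵥ (B *ᵥ (x ∘ σ)))))
    (x : ι → ℝ) : ∃ τ : Perm ι, x ⬝ᵥ (B *ᵥ x) = x ⬝ᵥ (A.submatrix τ τ *ᵥ x) := by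
  let q (M : Matrix ι ι ℝ) (σ : Perm ι) : ℝ := (x ∘ σ) ⬝ᵥ (M *ᵥ (x ∘ σ))
  have hvalues : Finset.univ.val.map (q A) = Finset.univ.val.map (q B) := by
    refine Multiset.eq_of_sum_map_exp_neg_mul_eventuallyEq ?_
    filter_upwards [eventually_ge_atTop 0] with s hs
    have hscale : ∀ (M : Matrix ι ι ℝ) (σ : Perm ι),
        ((√s • x) ∘ σ) ⬝ᵥ (M *ᵥ ((√s • x) ∘ σ)) = s * q M σ := by
      intro M σ
      rw [show (√s • x) ∘ σ = √s • (x ∘ σ) from rfl, mulVec_smul, smul_dotProduct,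
        dotProduct_smul, smul_eq_mul, smul_eq_mul, ← mul_assoc, Real.mul_self_sqrt hs]
    have hs := h (√s • x)
    simp only [hscale] at hs
    rwa [Multiset.map_map, Multiset.map_map]
  obtain ⟨τ, -, hτ⟩ : ∃ τ ∈ Finset.univ.val, q A τ = q B 1 :=
    Multiset.mem_map.1 (hvalues ▸ Multiset.mem_map_of_mem (q B) (Finset.mem_univ_val 1))
  refine ⟨τ.symm, ?_⟩
  rw [dotProduct_submatrix_mulVec_self]
  exact hτ.symm

end SymmetrizedGaussian

theorem stmt_14 (n : ℕ) (S S' : Matrix (Fin n) (Fin n) ℝ)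
    (hS : S.PosDef) (hS' : S'.PosDef) :
    (∃ π : Equiv.Perm (Fin n), ∀ i j, S' i j = S (π i) (π j)) ↔
      ∀ x : Fin n → ℝ,
        ∑ σ : Equiv.Perm (Fin n),
            Real.exp (-((x ∘ σ) ⬝ᵥ (S⁻¹ *ᵥ (x ∘ σ)))) =
          ∑ σ : Equiv.Perm (Fin n),
            Real.exp (-((x ∘ σ) ⬝ᵥ (S'⁻¹ *ᵥ (x ∘ σ)))) := by
  constructor
  · rintro ⟨π, hπ⟩ x
    rw [show S' = S.submatrix π π from Matrix.ext hπ, inv_submatrix_equiv]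
    exact (sum_perm_dotProduct_submatrix_mulVec (fun t => Real.exp (-t)) _ _ _).symm
  · intro h
    obtain ⟨π, hπ⟩ := exists_forall_dotProduct_mulVec_eq_of_forall_exists _ _
      (exists_perm_dotProduct_mulVec_eq_of_sum_exp_eq h)
    have hinv : S'⁻¹ = (S.submatrix π π)⁻¹ := by
      rw [inv_submatrix_equiv]
      refine IsSymm.ext_of_dotProduct_mulVec ?_ ?_ hπ
      · exact isHermitian_iff_isSymm.1 hS'.inv.isHermitian
      · exact (isHermitian_iff_isSymm.1 hS.inv.isHermitian).submatrix π
    have hS'π : S' = S.submatrix π π := inv_inj hinv ((isUnit_iff_isUnit_det _).1 hS'.isUnit)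
    exact ⟨π, fun i j => by rw [hS'π, submatrix_apply]⟩
end

section
/- Let m ≥ 1 and let a, b : Fin m → ℝ be two families of real numbers such that ∑ᵢ (a i)^k = ∑ᵢ (b i)^k for every k with 1 ≤ k ≤ m. Then the two families define the same multiset; that is, there exists a permutation σ of Fin m such that b i = a (σ i) for all i. -/
/-!
Newton's identities express the elementary symmetric functions `e₁, …, eₘ` of `m` numbers
through their first `m` power sums, with only the divisions by `1, …, m` that characteristic
zero allows. So both families have the same `eₖ`, hence by Vieta the same monic polynomial
`∏ (X - xᵢ)`, hence the same multiset of roots.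
-/

open Finset Polynomial

namespace MvPolynomial

theorem map_esymm_eq_of_map_psum_eq {σ R S : Type*} [Fintype σ] [CommRing R] [CommRing S]
    [IsDomain S] [CharZero S] (φ ψ : MvPolynomial σ R →+* S) {n : ℕ}
    (h : ∀ k, 1 ≤ k → k ≤ n → φ (psum σ R k) = ψ (psum σ R k)) {k : ℕ} (hk : k ≤ n) :
    φ (esymm σ R k) = ψ (esymm σ R k) := by
  induction k using Nat.strong_induction_on with
  | _ k ih =>
  rcases Nat.eq_zero_or_pos k with rfl | hk0
  · simp
  have hsum :
      φ (∑ p ∈ antidiagonal k with p.1 < k, (-1) ^ p.1 * esymm σ R p.1 * psum σ R p.2) =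
        ψ (∑ p ∈ antidiagonal k with p.1 < k, (-1) ^ p.1 * esymm σ R p.1 * psum σ R p.2) := by
    simp only [map_sum, map_mul, map_pow, map_neg, map_one]
    refine sum_congr rfl fun p hp => ?_
    rw [mem_filter, HasAntidiagonal.mem_antidiagonal] at hp
    rw [ih p.1 hp.2 (by omega), h p.2 (by omega) (by omega)]
  refine mul_left_cancel₀ (Nat.cast_ne_zero.mpr hk0.ne' : (k : S) ≠ 0) ?_
  calc (k : S) * φ (esymm σ R k) = φ (k * esymm σ R k) := by simp
    _ = ψ (k * esymm σ R k) := by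
      rw [mul_esymm_eq_sum, map_mul, map_mul, hsum, map_pow, map_pow, map_neg, map_neg, map_one,
        map_one]
    _ = k * ψ (esymm σ R k) := by simp

end MvPolynomial

theorem Multiset.esymm_map_univ_eq_of_sum_pow_eq {ι R : Type*} [Fintype ι] [CommRing R]
    [IsDomain R] [CharZero R] {a b : ι → R} {n : ℕ}
    (h : ∀ k, 1 ≤ k → k ≤ n → ∑ i, a i ^ k = ∑ i, b i ^ k) {k : ℕ} (hk : k ≤ n) :
    (univ.val.map a).esymm k = (univ.val.map b).esymm k := by
  simpa only [AlgHom.toRingHom_eq_coe, RingHom.coe_coe,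
    MvPolynomial.aeval_esymm_eq_multiset_esymm] using
    MvPolynomial.map_esymm_eq_of_map_psum_eq (MvPolynomial.aeval (R := R) a).toRingHom
      (MvPolynomial.aeval (R := R) b).toRingHom
      (by simpa only [MvPolynomial.psum, map_sum, map_pow, AlgHom.toRingHom_eq_coe,
        RingHom.coe_coe, MvPolynomial.aeval_X] using h) hk

theorem Multiset.eq_of_card_eq_of_esymm_eq {R : Type*} [CommRing R] [IsDomain R]
    {s t : Multiset R} (hcard : card s = card t) (h : ∀ k ≤ card s, s.esymm k = t.esymm k) :
    s = t := by
  have hprod : (s.map fun r => X - C r).prod = (t.map fun r => X - C r).prod := by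
    rw [prod_X_sub_X_eq_sum_esymm, prod_X_sub_X_eq_sum_esymm, ← hcard]
    refine sum_congr rfl fun k hk => ?_
    rw [h k (Nat.lt_succ_iff.mp (mem_range.mp hk))]
  simpa only [roots_multiset_prod_X_sub_C] using congrArg roots hprod

theorem exists_perm_eq_comp_of_map_univ_eq {ι α : Type*} [Fintype ι] [DecidableEq α]
    {a b : ι → α} (h : univ.val.map a = univ.val.map b) :
    ∃ σ : Equiv.Perm ι, ∀ i, b i = a (σ i) := by
  have hfiber : ∀ c, Fintype.card {i // b i = c} = Fintype.card {i // a i = c} := fun c => by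
    have := congrArg (Multiset.count c) h.symm
    simp only [Multiset.count_map, @eq_comm _ c] at this
    rw [Fintype.card_subtype, Fintype.card_subtype]
    exact this
  exact ⟨Equiv.ofFiberEquiv fun c => Fintype.equivOfCardEq (hfiber c),
    fun i => (Equiv.ofFiberEquiv_map _ i).symm⟩

theorem stmt_19_general (m : ℕ) (a b : Fin m → ℝ)
    (h : ∀ k, 1 ≤ k → k ≤ m → ∑ i, a i ^ k = ∑ i, b i ^ k) :
    ∃ σ : Equiv.Perm (Fin m), ∀ i, b i = a (σ i) :=
  exists_perm_eq_comp_of_map_univ_eq <| Multiset.eq_of_card_eq_of_esymm_eq (by simp)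
    fun _ hk => Multiset.esymm_map_univ_eq_of_sum_pow_eq h (by simpa using hk)

theorem stmt_19 (m : ℕ) (hm : 1 ≤ m) (a b : Fin m → ℝ)
    (h : ∀ k, 1 ≤ k → k ≤ m → ∑ i, a i ^ k = ∑ i, b i ^ k) :
    ∃ σ : Equiv.Perm (Fin m), ∀ i, b i = a (σ i) :=
  stmt_19_general m a b h
end
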